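/- arXiv:1805.06590 — 5 statements merged into one kernel-verified Lean document; each statement's English description precedes it below -/
import Mathlib

section
/- Let B = A[X;σ] be an Ore extension of k-algebras, and assume σ extends to a k-algebra automorphism σ̂ of B with σ̂(X) = qX for some q ∈ k* which is not a root of unity. If I is a σ̂-invariant two-sided ideal of B such that for all a ∈ A and n ∈ ℕ, aXⁿ ∈ I implies a ∈ I, then I = (I ∩ A)B. -/
/-!
Write `b ∈ I` as `∑ cⱼ Xʲ` and let `n` be its top degree. Since `σ̂(a Xʲ) = qʲ σ(a) Xʲ`, the
element `qⁿ X b - σ̂(b) X` of `I` equals `∑ (qⁿ - qʲ) σ(cⱼ) Xʲ⁺¹`, which has one term fewer.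
Because `q` is not a root of unity the scalars `qⁿ - qʲ` (`j < n`) are invertible, so by
induction on the number of terms all lower coefficients lie in `I`; then `cₙ Xⁿ ∈ I` and the
hypothesis on `I` gives `cₙ ∈ I`. Hence `b ∈ (I ∩ A)B`.
-/

/-- `B = A[X; σ]` is an Ore (skew polynomial) extension: `A` is a subalgebra of `B`,
`X ∈ B` satisfies `X * a = σ(a) * X` for `a ∈ A`, and the powers of `X` form a basis
of `B` as a left `A`-module (every element of `B` is uniquely `∑ aᵢ Xⁱ` with `aᵢ ∈ A`). -/
structure IsOreExtension (k : Type*) [Field k] {B : Type*} [Ring B] [Algebra k B]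
    (A : Subalgebra k B) (σ : A ≃ₐ[k] A) (X : B) : Prop where
  commute : ∀ a : A, X * (a : B) = (σ a : B) * X
  exists_rep : ∀ b : B, ∃ f : ℕ →₀ A, b = f.sum fun i a => (a : B) * X ^ i
  indep : ∀ f : ℕ →₀ A, (f.sum fun i a => (a : B) * X ^ i) = 0 → f = 0

lemma pow_ne_pow_of_lt {M₀ : Type*} [MonoidWithZero M₀] [IsCancelMulZero M₀] {q : M₀}
    (hq0 : q ≠ 0) (hq : ∀ n : ℕ, 0 < n → q ^ n ≠ 1) {j n : ℕ} (hjn : j < n) : q ^ j ≠ q ^ n := by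
  intro h
  refine hq (n - j) (Nat.sub_pos_of_lt hjn) (mul_left_cancel₀ (pow_ne_zero j hq0) ?_)
  rw [← pow_add, Nat.add_sub_cancel' hjn.le, mul_one, h]

lemma TwoSidedIdeal.smul_mem_iff {k R : Type*} [Field k] [Ring R] [Algebra k R]
    (I : TwoSidedIdeal R) {r : k} (hr : r ≠ 0) {x : R} : r • x ∈ I ↔ x ∈ I := by
  refine ⟨fun hx => ?_, fun hx => Algebra.smul_def r x ▸ I.mul_mem_left _ _ hx⟩
  have h := I.mul_mem_left (algebraMap k R r⁻¹) _ hx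
  rwa [← Algebra.smul_def, smul_smul, inv_mul_cancel₀ hr, one_smul] at h

section OreExtension

variable {k B : Type*} [Field k] [Ring B] [Algebra k B] {A : Subalgebra k B} {σ : A ≃ₐ[k] A}
  {X : B} {σhat : B ≃ₐ[k] B} {q : k}

lemma map_coe_mul_X_pow (hext : ∀ a : A, σhat (a : B) = (σ a : B)) (hX : σhat X = q • X)
    (a : A) (j : ℕ) : σhat ((a : B) * X ^ j) = q ^ j • ((σ a : B) * X ^ j) := by
  rw [map_mul, map_pow, hX, hext, smul_pow, mul_smul_comm]

lemma smul_X_mul_sub_map_mul_X (hcomm : ∀ a : A, X * (a : B) = (σ a : B) * X)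
    (hext : ∀ a : A, σhat (a : B) = (σ a : B)) (hX : σhat X = q • X) (m : ℕ) (a : A) (j : ℕ) :
    q ^ m • (X * ((a : B) * X ^ j)) - σhat ((a : B) * X ^ j) * X
      = (((q ^ m - q ^ j) • σ a : A) : B) * X ^ (j + 1) := by
  rw [map_coe_mul_X_pow hext hX, ← mul_assoc, hcomm, mul_assoc, ← pow_succ', smul_mul_assoc,
    mul_assoc, ← pow_succ, Subalgebra.coe_smul, sub_smul, sub_mul, smul_mul_assoc,
    smul_mul_assoc]

/-- The shift `e` absorbs the factor `X` that the twisted commutator adds to every term. -/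
theorem coe_mem_of_sum_mul_X_pow_mem (hcomm : ∀ a : A, X * (a : B) = (σ a : B) * X)
    (hext : ∀ a : A, σhat (a : B) = (σ a : B)) (hX : σhat X = q • X)
    (hq0 : q ≠ 0) (hq : ∀ n : ℕ, 0 < n → q ^ n ≠ 1) {I : TwoSidedIdeal B}
    (hinv : ∀ x : B, x ∈ I ↔ σhat x ∈ I)
    (hcoef : ∀ (a : A) (n : ℕ), (a : B) * X ^ n ∈ I → (a : B) ∈ I) (s : Finset ℕ) :
    ∀ (c : ℕ → A) (e : ℕ), ∑ j ∈ s, (c j : B) * X ^ (j + e) ∈ I → ∀ j ∈ s, (c j : B) ∈ I := by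
  induction s using Finset.induction_on_max with
  | empty => simp
  | insert n s hlt ih =>
    intro c e hmem
    have hn : n ∉ s := fun h => (hlt n h).false
    set b := ∑ j ∈ insert n s, (c j : B) * X ^ (j + e)
    have hshift : ∑ j ∈ s, (((q ^ (n + e) - q ^ (j + e)) • σ (c j) : A) : B) * X ^ (j + (e + 1))
        ∈ I := by
      have hy : q ^ (n + e) • (X * b) - σhat b * X ∈ I :=
        I.sub_mem ((I.smul_mem_iff (pow_ne_zero _ hq0)).mpr (I.mul_mem_left _ _ hmem))
          (I.mul_mem_right _ _ ((hinv b).mp hmem))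
      simp only [b, Finset.mul_sum, Finset.smul_sum, map_sum, Finset.sum_mul,
        ← Finset.sum_sub_distrib, smul_X_mul_sub_map_mul_X hcomm hext hX] at hy
      rwa [Finset.sum_insert hn, sub_self, zero_smul, ZeroMemClass.coe_zero, zero_mul,
        zero_add] at hy
    have hlow : ∀ j ∈ s, (c j : B) ∈ I := by
      intro j hj
      have hj' := ih (fun j => (q ^ (n + e) - q ^ (j + e)) • σ (c j)) (e + 1) hshift j hj
      have hne : q ^ (n + e) - q ^ (j + e) ≠ 0 :=
        sub_ne_zero.mpr (pow_ne_pow_of_lt hq0 hq (by simpa using hlt j hj)).symm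
      rwa [Subalgebra.coe_smul, I.smul_mem_iff hne, ← hext, ← hinv] at hj'
    have htop : (c n : B) ∈ I := by
      refine hcoef (c n) (n + e) ?_
      have hrest := I.finsetSum_mem _ _ fun j hj => I.mul_mem_right _ (X ^ (j + e)) (hlow j hj)
      simp only [b, Finset.sum_insert hn] at hmem
      simpa using I.sub_mem hmem hrest
    intro j hj
    rcases Finset.mem_insert.mp hj with rfl | hj
    exacts [htop, hlow j hj]
end OreExtension

/-- Lemma 5.2(i) of Goodearl–Launois–Lenagan: if `B = A[X;σ]`, `σ̂` is a `k`-algebra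
automorphism of `B` extending `σ` with `σ̂(X) = qX` for `q ∈ k*` not a root of unity,
and `I` is a `σ̂`-invariant two-sided ideal of `B` such that `aXⁿ ∈ I` implies `a ∈ I`
for `a ∈ A` and `n ∈ ℕ`, then `I = (I ∩ A)B`, the two-sided ideal of `B` generated
by `I ∩ A`. -/
theorem ore_invariant_ideal_induced
    (k : Type*) [Field k] {B : Type*} [Ring B] [Algebra k B]
    (A : Subalgebra k B) (σ : A ≃ₐ[k] A) (X : B)
    (hOre : IsOreExtension k A σ X)
    (σhat : B ≃ₐ[k] B)
    (hext : ∀ a : A, σhat (a : B) = (σ a : B))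
    (q : k) (hq0 : q ≠ 0) (hq : ∀ n : ℕ, 0 < n → q ^ n ≠ 1)
    (hX : σhat X = q • X)
    (I : TwoSidedIdeal B)
    (hinv : ∀ x : B, x ∈ I ↔ σhat x ∈ I)
    (hcoef : ∀ (a : A) (n : ℕ), (a : B) * X ^ n ∈ I → (a : B) ∈ I) :
    I = TwoSidedIdeal.span ((I : Set B) ∩ (A : Set B)) := by
  refine le_antisymm (fun x hx => ?_) (TwoSidedIdeal.span_le.mpr Set.inter_subset_left)
  obtain ⟨f, rfl⟩ := hOre.exists_rep x
  have hcoeff := coe_mem_of_sum_mul_X_pow_mem hOre.commute hext hX hq0 hq hinv hcoef f.support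
    f 0 (by simpa [Finsupp.sum] using hx)
  exact TwoSidedIdeal.finsetSum_mem _ _ _ fun i hi =>
    TwoSidedIdeal.mul_mem_right _ _ _ (TwoSidedIdeal.subset_span ⟨hcoeff i hi, (f i).2⟩)
end

section
/- Let B = A[X;σ] be an Ore extension of k-algebras, σ̂ an automorphism of B extending σ with σ̂(X) = qX where q ∈ k* is not a root of unity, and I a σ̂-invariant ideal of B such that aXⁿ ∈ I implies a ∈ I for all a ∈ A, n ∈ ℕ. Then the natural map (A/(I∩A))[X̄; σ̄] → B/I is a k-algebra isomorphism. -/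
theorem pow_right_injective_of_pow_ne_one {M₀ : Type*} [GroupWithZero M₀] {q : M₀}
    (hq0 : q ≠ 0) (hq : ∀ n : ℕ, 0 < n → q ^ n ≠ 1) :
    Function.Injective (q ^ · : ℕ → M₀) := by
  set u := Units.mk0 q hq0
  have hu : orderOf u = 0 :=
    orderOf_eq_zero_iff'.mpr fun n hn h => hq n hn (by simpa [u] using congrArg Units.val h)
  intro i j hij
  exact (pow_inj_iff_of_orderOf_eq_zero hu).mp (Units.ext (by simpa [u] using hij))

theorem TwoSidedIdeal.smul_mem_iff_of_ne_zero {k B : Type*} [Field k] [Ring B] [Algebra k B]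
    (I : TwoSidedIdeal B) {r : k} (hr : r ≠ 0) {x : B} : r • x ∈ I ↔ x ∈ I := by
  have smul_mem : ∀ (s : k) {y : B}, y ∈ I → s • y ∈ I := fun s y hy => by
    rw [Algebra.smul_def]
    exact I.mul_mem_left _ _ hy
  refine ⟨fun h => ?_, smul_mem r⟩
  simpa [smul_smul, inv_mul_cancel₀ hr] using smul_mem r⁻¹ h

section SkewPolynomial

variable {k B : Type*} [Field k] [Ring B] [Algebra k B] {A : Subalgebra k B} {σ : A → A}
  {X : B}

theorem mul_sum_mul_pow (hcomm : ∀ a : A, X * (a : B) = (σ a : B) * X)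
    (s : Finset ℕ) (c : ℕ → A) (m : ℕ) :
    X * ∑ i ∈ s, (c i : B) * X ^ (i + m) = ∑ i ∈ s, (σ (c i) : B) * X ^ (i + m + 1) := by
  rw [Finset.mul_sum]
  refine Finset.sum_congr rfl fun i _ => ?_
  rw [← mul_assoc, hcomm, mul_assoc, ← pow_succ']

theorem map_sum_mul_pow {σhat : B →ₐ[k] B} (hext : ∀ a : A, σhat (a : B) = (σ a : B))
    {q : k} (hX : σhat X = q • X) (s : Finset ℕ) (c : ℕ → A) (m : ℕ) :
    σhat (∑ i ∈ s, (c i : B) * X ^ (i + m)) =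
      ∑ i ∈ s, q ^ (i + m) • ((σ (c i) : B) * X ^ (i + m)) := by
  rw [map_sum]
  refine Finset.sum_congr rfl fun i _ => ?_
  rw [map_mul, map_pow, hext, hX, smul_pow, mul_smul_comm]

theorem map_sum_mul_pow_mul_sub_smul_mul_sum (hcomm : ∀ a : A, X * (a : B) = (σ a : B) * X)
    {σhat : B →ₐ[k] B} (hext : ∀ a : A, σhat (a : B) = (σ a : B))
    {q : k} (hX : σhat X = q • X) (r : k) (s : Finset ℕ) (c : ℕ → A) (m : ℕ) :
    σhat (∑ i ∈ s, (c i : B) * X ^ (i + m)) * X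
        - r • (X * ∑ i ∈ s, (c i : B) * X ^ (i + m))
      = ∑ i ∈ s, (((q ^ (i + m) - r) • σ (c i) : A) : B) * X ^ (i + (m + 1)) := by
  rw [map_sum_mul_pow hext hX, mul_sum_mul_pow hcomm, Finset.sum_mul, Finset.smul_sum,
    ← Finset.sum_sub_distrib]
  refine Finset.sum_congr rfl fun i _ => ?_
  rw [SetLike.val_smul, sub_smul, sub_mul, smul_mul_assoc, smul_mul_assoc, mul_assoc,
    ← pow_succ, ← add_assoc, smul_mul_assoc]

/-- The shift `m` makes the statement stable under multiplication by `X`, which the induction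
step needs. -/
theorem coeff_mem_of_sum_mul_pow_mem (hcomm : ∀ a : A, X * (a : B) = (σ a : B) * X)
    {σhat : B →ₐ[k] B} (hext : ∀ a : A, σhat (a : B) = (σ a : B))
    {q : k} (hq0 : q ≠ 0) (hq : ∀ n : ℕ, 0 < n → q ^ n ≠ 1) (hX : σhat X = q • X)
    {I : TwoSidedIdeal B} (hinv : ∀ x : B, x ∈ I ↔ σhat x ∈ I)
    (hcoef : ∀ (a : A) (n : ℕ), (a : B) * X ^ n ∈ I → (a : B) ∈ I) (s : Finset ℕ) :
    ∀ (c : ℕ → A) (m : ℕ), ∑ i ∈ s, (c i : B) * X ^ (i + m) ∈ I → ∀ i ∈ s, (c i : B) ∈ I := by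
  induction s using Finset.induction_on_max with
  | empty => simp
  | insert d s hlt ih =>
    intro c m hmem
    have hd : d ∉ s := fun h => (hlt d h).false
    have hdiff :
        ∑ i ∈ s, (((q ^ (i + m) - q ^ (d + m)) • σ (c i) : A) : B) * X ^ (i + (m + 1)) ∈ I := by
      rw [← Finset.sum_insert_zero (a := d) (by simp),
        ← map_sum_mul_pow_mul_sub_smul_mul_sum hcomm hext hX]
      exact I.sub_mem (I.mul_mem_right _ _ ((hinv _).mp hmem))
        ((I.smul_mem_iff_of_ne_zero (pow_ne_zero _ hq0)).mpr (I.mul_mem_left _ _ hmem))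
    have hlow : ∀ i ∈ s, (c i : B) ∈ I := by
      intro i hi
      have hne : q ^ (i + m) - q ^ (d + m) ≠ 0 := sub_ne_zero.mpr fun h =>
        (hlt i hi).ne (by simpa using pow_right_injective_of_pow_ne_one hq0 hq h)
      have h := ih _ (m + 1) hdiff i hi
      rw [SetLike.val_smul, I.smul_mem_iff_of_ne_zero hne, ← hext, ← hinv] at h
      exact h
    have htop : (c d : B) * X ^ (d + m) ∈ I := by
      rw [Finset.sum_insert hd] at hmem
      simpa using I.sub_mem hmem
        (I.finsetSum_mem s (fun i => (c i : B) * X ^ (i + m)) fun i hi =>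
          I.mul_mem_right _ _ (hlow i hi))
    simpa [Finset.forall_mem_insert] using ⟨hcoef _ _ htop, hlow⟩

end SkewPolynomial

/-- Lemma 5.2(ii) of Goodearl–Launois–Lenagan: with `B = A[X;σ]`, `σ̂` an automorphism
of `B` extending `σ` with `σ̂(X) = qX` (`q ∈ k*` not a root of unity), and `I` a
`σ̂`-invariant two-sided ideal of `B` such that `aXⁿ ∈ I` implies `a ∈ I`, the natural
map `(A/(I∩A))[X̄;σ̄] → B/I` is a `k`-algebra isomorphism.

Since this natural map sends the class of `∑ (aᵢ + (I∩A)) X̄ⁱ` to `(∑ aᵢ Xⁱ) + I` and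
is surjective (every element of `B` is `∑ aᵢ Xⁱ`), it is an isomorphism precisely when
a polynomial `∑ aᵢ Xⁱ` lies in `I` if and only if all its coefficients `aᵢ` lie in `I`;
this is the statement formalized below. -/
theorem ore_quotient_is_ore_extension
    (k : Type*) [Field k] {B : Type*} [Ring B] [Algebra k B]
    (A : Subalgebra k B) (σ : A ≃ₐ[k] A) (X : B)
    (hOre : IsOreExtension k A σ X)
    (σhat : B ≃ₐ[k] B)
    (hext : ∀ a : A, σhat (a : B) = (σ a : B))
    (q : k) (hq0 : q ≠ 0) (hq : ∀ n : ℕ, 0 < n → q ^ n ≠ 1)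
    (hX : σhat X = q • X)
    (I : TwoSidedIdeal B)
    (hinv : ∀ x : B, x ∈ I ↔ σhat x ∈ I)
    (hcoef : ∀ (a : A) (n : ℕ), (a : B) * X ^ n ∈ I → (a : B) ∈ I) :
    ∀ f : ℕ →₀ A, (f.sum fun i a => (a : B) * X ^ i) ∈ I ↔ ∀ i : ℕ, (f i : B) ∈ I := by
  intro f
  refine ⟨fun hmem i => ?_,
    fun h => I.finsetSum_mem _ _ fun i _ => I.mul_mem_right _ _ (h i)⟩
  by_cases hi : i ∈ f.support
  · exact coeff_mem_of_sum_mul_pow_mem (σhat := (σhat : B →ₐ[k] B)) hOre.commute hext hq0 hq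
      hX hinv hcoef f.support f 0 (by simpa [Finsupp.sum] using hmem) i hi
  · simp [Finsupp.notMem_support_iff.mp hi, I.zero_mem]
end

section
/- Let B ⊆ A be k-algebras that are prime right Goldie rings, such that every regular element of B is regular in A, and A is finitely generated as a right B-module. Then the right Goldie quotient ring Fract(A) is finitely generated as a right module over Fract(B). -/
/-- A ring is prime if the product of two nonzero two-sided ideals is nonzero;
elementwise: `aRb = 0` implies `a = 0` or `b = 0`. -/
def IsPrimeRing' (R : Type*) [Ring R] : Prop :=
  Nontrivial R ∧ ∀ a b : R, (∀ r : R, a * r * b = 0) → a = 0 ∨ b = 0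

/-- A ring is right Goldie if it has the ascending chain condition on right
annihilators and contains no infinite direct sum of nonzero right ideals. -/
def IsRightGoldie (R : Type*) [Ring R] : Prop :=
  (∀ f : ℕ → Set R, (∀ n, ∃ S : Set R, f n = {r : R | ∀ s ∈ S, s * r = 0}) →
      (∀ n, f n ⊆ f (n + 1)) → ∃ N, ∀ n, N ≤ n → f n = f N) ∧
  ¬ ∃ I : ℕ → Submodule Rᵐᵒᵖ R, (∀ n, I n ≠ ⊥) ∧ iSupIndep I

/-- `f : A →+* Q` realizes `Q` as the classical right quotient ring of `A`:
`f` is injective, regular elements of `A` become units, and every element of `Q`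
is a right fraction `f(a) f(s)⁻¹`, equivalently `x * f s = f a`. -/
def IsClassicalRightQuotientRing {A Q : Type*} [Ring A] [Ring Q] (f : A →+* Q) : Prop :=
  Function.Injective f ∧ (∀ a : A, IsRegular a → IsUnit (f a)) ∧
    ∀ x : Q, ∃ a s : A, IsRegular s ∧ x * f s = f a

/-!
Most of the work is the part of Goldie's theorem saying that `Fract(B)` is right artinian. In a
prime right Goldie ring, ACC on right annihilators shows that no nonzero right ideal is nil and
yields nonzero elements `y` with `r.ann(y²) = r.ann(y)`. The absence of infinite direct sums of
right ideals, applied to "triangular" families (each term meets the right ideal containing all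
later terms trivially), then shows that essential right ideals contain regular elements. A
strictly descending chain of right ideals of `Fract(B)` contracts to a strictly descending chain
of right ideals of `B` saturated with respect to regular elements, and such a chain produces an
infinite triangular family.

Then `D := f(A) · Fract(B)` is a finitely generated right module over the right artinian ring
`Fract(B)`, stable under left multiplication by `f(A)`. For regular `s`, left multiplication by
the unit `f(s)` is injective on the artinian module `D`, hence surjective, so `f(s)⁻¹ ∈ D` and
every fraction `f(a) f(s)⁻¹` lies in `D`.
-/

open MulOpposite

theorem Finset.eq_zero_of_sum_eq_zero_of_triangular {ι N : Type*} [LinearOrder ι]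
    [AddCommGroup N] {K : ι → AddSubgroup N} {s : Finset ι} {v : ι → N}
    (hlt : ∀ i ∈ s, ∀ j ∈ s, i < j → v j ∈ K i) (hK : ∀ i ∈ s, v i ∈ K i → v i = 0)
    (hsum : ∑ i ∈ s, v i = 0) : ∀ i ∈ s, v i = 0 := by
  classical
  induction s using Finset.induction_on_min with
  | empty => simp
  | insert a s has ih =>
    have ha : a ∉ s := fun h => lt_irrefl a (has a h)
    rw [Finset.sum_insert ha] at hsum
    have hva : v a = 0 := by
      refine hK a (mem_insert_self a s) ?_
      rw [eq_neg_of_add_eq_zero_left hsum]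
      exact neg_mem <| sum_mem fun j hj =>
        hlt a (mem_insert_self a s) j (mem_insert_of_mem hj) (has j hj)
    rw [hva, zero_add] at hsum
    have hs := ih (fun i hi j hj => hlt i (mem_insert_of_mem hi) j (mem_insert_of_mem hj))
      (fun i hi => hK i (mem_insert_of_mem hi)) hsum
    simpa [hva] using hs

noncomputable def seqOfPrefix {α : Type*} (F : ∀ n, (Fin n → α) → α) : ℕ → α
  | n => F n fun i => seqOfPrefix F i

theorem exists_seq_of_forall_fin_exists {α : Type*} (P : α → Prop) (r : α → α → Prop)
    (h : ∀ n (v : Fin n → α), (∀ i, P (v i)) → (∀ i j, i < j → r (v i) (v j)) →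
      ∃ y, P y ∧ ∀ i, r (v i) y) :
    ∃ f : ℕ → α, (∀ n, P (f n)) ∧ ∀ m n, m < n → r (f m) (f n) := by
  obtain ⟨y, -⟩ := h 0 Fin.elim0 (fun i => i.elim0) fun i => i.elim0
  have : Nonempty α := ⟨y⟩
  choose! F hF using h
  have key : ∀ n, P (seqOfPrefix F n) ∧ ∀ m < n, r (seqOfPrefix F m) (seqOfPrefix F n) := by
    intro n
    induction n using Nat.strong_induction_on with
    | _ n ih =>
      rw [seqOfPrefix]
      have := hF n (fun i => seqOfPrefix F i) (fun i => (ih i i.2).1)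
        fun i j hij => (ih j j.2).2 i hij
      exact ⟨this.1, fun m hm => this.2 ⟨m, hm⟩⟩
  exact ⟨seqOfPrefix F, fun n => (key n).1, fun m n hmn => (key n).2 m hmn⟩

section RightIdeals

variable {R : Type*} [Ring R]

def rightAnnihilator (S : Set R) : Submodule Rᵐᵒᵖ R where
  carrier := {r | ∀ s ∈ S, s * r = 0}
  add_mem' hx hy s hs := by rw [mul_add, hx s hs, hy s hs, add_zero]
  zero_mem' s _ := mul_zero s
  smul_mem' c x hx s hs := by
    show s * (x * c.unop) = 0
    rw [← mul_assoc, hx s hs, zero_mul]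

@[simp]
theorem mem_rightAnnihilator {S : Set R} {x : R} :
    x ∈ rightAnnihilator S ↔ ∀ s ∈ S, s * x = 0 :=
  Iff.rfl

theorem mem_span_singleton_iff_exists_mul {x y : R} :
    x ∈ Submodule.span Rᵐᵒᵖ {y} ↔ ∃ r, y * r = x :=
  Submodule.mem_span_singleton.trans ⟨fun ⟨a, h⟩ => ⟨a.unop, h⟩, fun ⟨r, h⟩ => ⟨op r, h⟩⟩

def IsEssentialRightIdeal (E : Submodule Rᵐᵒᵖ R) : Prop :=
  ∀ a : R, a ≠ 0 → ∃ r, a * r ∈ E ∧ a * r ≠ 0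

theorem isEssentialRightIdeal_comap_mulLeft {E : Submodule Rᵐᵒᵖ R} {b : R}
    (h : ∀ a, b * a ≠ 0 → ∃ r, b * a * r ∈ E ∧ b * a * r ≠ 0) :
    IsEssentialRightIdeal (E.comap (DistribSMul.toLinearMap Rᵐᵒᵖ R b)) := by
  intro a ha
  by_cases hba : b * a = 0
  · exact ⟨1, by simp [hba], by simpa using ha⟩
  · obtain ⟨r, hr, hr0⟩ := h a hba
    refine ⟨r, by simpa [mul_assoc] using hr, fun h0 => hr0 ?_⟩
    rw [mul_assoc, h0, mul_zero]

end RightIdeals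

namespace IsRightGoldie

variable {R : Type*} [Ring R]

theorem exists_rightAnnihilator_eq (hG : IsRightGoldie R) {x : ℕ → R}
    (hx : Monotone fun n => rightAnnihilator {x n}) :
    ∃ N, ∀ n ≥ N, rightAnnihilator {x n} = rightAnnihilator {x N} := by
  obtain ⟨N, hN⟩ := hG.1 (fun n => rightAnnihilator {x n}) (fun n => ⟨{x n}, rfl⟩)
    fun n => hx n.le_succ
  exact ⟨N, fun n hn => SetLike.coe_injective (hN n hn)⟩

theorem exists_maximal_rightAnnihilator (hG : IsRightGoldie R) {S : Set R} (hS : S.Nonempty) :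
    ∃ x ∈ S, ∀ y ∈ S, rightAnnihilator {x} ≤ rightAnnihilator {y} →
      rightAnnihilator {y} = rightAnnihilator {x} := by
  have hwf : WellFounded fun y x : R => rightAnnihilator {x} < rightAnnihilator {y} := by
    refine RelEmbedding.wellFounded_iff_isEmpty.2 ⟨fun f => ?_⟩
    have hf : StrictMono fun n => rightAnnihilator {f n} := fun m n h => f.map_rel_iff.2 h
    obtain ⟨N, hN⟩ := hG.exists_rightAnnihilator_eq hf.monotone
    exact (hf N.lt_succ_self).ne (hN (N + 1) N.le_succ).symm
  obtain ⟨x, hxS, hx⟩ := hwf.has_min S hS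
  exact ⟨x, hxS, fun y hyS hle => (eq_of_le_of_not_lt hle (hx y hyS)).symm⟩

theorem exists_rightAnnihilator_pow_eq (hG : IsRightGoldie R) (x : R) :
    ∃ N, ∀ n ≥ N, rightAnnihilator {x ^ n} = rightAnnihilator {x ^ N} :=
  hG.exists_rightAnnihilator_eq <| monotone_nat_of_le_succ fun n r hr => by
    simp_all [pow_succ', mul_assoc]

theorem exists_eq_zero_of_triangular (hG : IsRightGoldie R) {K : ℕ → Submodule Rᵐᵒᵖ R}
    {w : ℕ → R} (hlt : ∀ i j, i < j → w j ∈ K i) (hK : ∀ i r, w i * r ∈ K i → w i * r = 0) :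
    ∃ n, w n = 0 := by
  by_contra! hw
  refine hG.2 ⟨fun n => Submodule.span Rᵐᵒᵖ {w n}, fun n => by simpa using hw n, ?_⟩
  rw [iSupIndep_iff_finsetSum_eq_zero_imp_eq_zero]
  intro s v hv hsum
  refine Finset.eq_zero_of_sum_eq_zero_of_triangular (K := fun i => (K i).toAddSubgroup)
    (fun i _ j hj hij => ?_) (fun i hi hvi => ?_) hsum
  · obtain ⟨r, hr⟩ := mem_span_singleton_iff_exists_mul.1 (hv j hj)
    rw [← hr]
    exact (K i).smul_mem (op r) (hlt i j hij)
  · obtain ⟨r, hr⟩ := mem_span_singleton_iff_exists_mul.1 (hv i hi)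
    rw [← hr] at hvi ⊢
    exact hK i r hvi

theorem exists_not_isNilpotent_mul (hG : IsRightGoldie R) (hP : IsPrimeRing' R) {a : R}
    (ha : a ≠ 0) : ∃ b, ¬IsNilpotent (a * b) := by
  have := hP.1
  by_contra! hnil
  have hnil_left : ∀ b, IsNilpotent (b * a) := fun b => by
    obtain ⟨n, hn⟩ := hnil b
    exact ⟨n + 1, by rw [pow_succ, ← mul_assoc, mul_pow_mul, hn, mul_zero, zero_mul]⟩
  obtain ⟨_, ⟨hx0, b, rfl⟩, hmax⟩ := hG.exists_maximal_rightAnnihilator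
    (S := {x | x ≠ 0 ∧ ∃ b, b * a = x}) ⟨a, ha, 1, one_mul a⟩
  refine hx0 ((hP.2 (b * a) (b * a) fun c => ?_).elim id id)
  rw [mul_assoc]
  set w := c * (b * a)
  rcases eq_or_ne w 0 with hw | hw
  · rw [hw, mul_zero]
  have hwnil : IsNilpotent w := by simpa only [w, ← mul_assoc] using hnil_left (c * b)
  obtain ⟨n, hn⟩ : ∃ n, nilpotencyClass w = n + 2 := ⟨nilpotencyClass w - 2, by
    have := pos_nilpotencyClass_iff.2 hwnil
    have := nilpotencyClass_eq_one.not.2 hw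
    omega⟩
  have hwn : w ^ (n + 1) ≠ 0 := by simpa [hn] using pow_pred_nilpotencyClass hwnil
  have hwn' : w ^ (n + 2) = 0 := hn ▸ pow_nilpotencyClass hwnil
  -- The last nonzero power of `w` lies in `R a`, so by maximality it has the same right
  -- annihilator as `b * a`; and `w` kills it.
  have hle : rightAnnihilator {b * a} ≤ rightAnnihilator {w ^ (n + 1)} := fun r hr => by
    simp_all [pow_succ, w, mul_assoc]
  have heq := hmax (w ^ (n + 1)) ⟨hwn, w ^ n * c * b, by simp [pow_succ, w, mul_assoc]⟩ hle
  have hw_mem : w ∈ rightAnnihilator {w ^ (n + 1)} := by simpa [← pow_succ] using hwn'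
  simpa [heq] using hw_mem

theorem exists_mul_ne_zero_rightAnnihilator_mul_self_le (hG : IsRightGoldie R)
    (hP : IsPrimeRing' R) {a : R} (ha : a ≠ 0) :
    ∃ c, a * c ≠ 0 ∧ rightAnnihilator {a * c * (a * c)} ≤ rightAnnihilator {a * c} := by
  obtain ⟨b, hb⟩ := hG.exists_not_isNilpotent_mul hP ha
  obtain ⟨N, hN⟩ := hG.exists_rightAnnihilator_pow_eq (a * b)
  have hx : a * (b * (a * b) ^ N) = (a * b) ^ (N + 1) := by rw [← mul_assoc, pow_succ']
  refine ⟨b * (a * b) ^ N, ?_, ?_⟩ <;> rw [hx]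
  · exact fun h => hb ⟨_, h⟩
  · rw [← pow_add, hN _ (by omega), hN (N + 1) (by omega)]

theorem exists_isLeftRegular_mem (hG : IsRightGoldie R) (hP : IsPrimeRing' R)
    {E : Submodule Rᵐᵒᵖ R} (hE : IsEssentialRightIdeal E) : ∃ c ∈ E, IsLeftRegular c := by
  by_contra! hE'
  let P : R → Prop := fun y =>
    y ∈ E ∧ y ≠ 0 ∧ rightAnnihilator {y * y} ≤ rightAnnihilator {y}
  have hP_cancel : ∀ y r, P y → y * (y * r) = 0 → y * r = 0 := fun y r hy h => by
    simpa using hy.2.2 (show r ∈ rightAnnihilator {y * y} by simpa [mul_assoc] using h)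
  have hext : ∀ n (v : Fin n → R), (∀ i, P (v i)) → (∀ i j, i < j → v i * v j = 0) →
      ∃ y, P y ∧ ∀ i, v i * y = 0 := by
    intro n v hvP hv
    -- Otherwise `∑ i, v i ∈ E` would be left regular, by triangularity.
    obtain ⟨z, hz0, hz⟩ : ∃ z ≠ 0, ∀ i, v i * z = 0 := by
      by_contra! hno
      refine hE' (∑ i, v i) (sum_mem fun i _ => (hvP i).1)
        (isLeftRegular_iff_right_eq_zero_of_mul.2 fun r hr => ?_)
      by_contra hr0
      obtain ⟨i, hi⟩ := hno r hr0
      refine hi <| Finset.eq_zero_of_sum_eq_zero_of_triangular (s := .univ) (v := (v · * r))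
        (K := fun i => (rightAnnihilator (v '' Set.Iic i)).toAddSubgroup) ?_ ?_
        (by rwa [← Finset.sum_mul]) i (Finset.mem_univ i)
      · intro i _ j _ hij
        simpa [← mul_assoc] using fun k hk => by rw [hv k j (hk.trans_lt hij), zero_mul]
      · exact fun i _ h => hP_cancel _ _ (hvP i) (h _ ⟨i, Set.mem_Iic.2 le_rfl, rfl⟩)
    obtain ⟨r, hrE, hr0⟩ := hE z hz0
    obtain ⟨c, hc0, hc⟩ := hG.exists_mul_ne_zero_rightAnnihilator_mul_self_le hP hr0
    exact ⟨z * r * c, ⟨E.smul_mem (op c) hrE, hc0, hc⟩, fun i => by simp [← mul_assoc, hz i]⟩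
  obtain ⟨y, hyP, hy⟩ := exists_seq_of_forall_fin_exists P (fun x y => x * y = 0) hext
  obtain ⟨n, hn⟩ := hG.exists_eq_zero_of_triangular
    (K := fun i => rightAnnihilator (y '' Set.Iic i)) (w := y)
    (fun i j hij => by simpa using fun k hk => hy k j (hk.trans_lt hij))
    fun i r h => hP_cancel _ _ (hyP i) (h _ ⟨i, Set.mem_Iic.2 le_rfl, rfl⟩)
  exact (hyP n).2.1 hn

theorem isEssentialRightIdeal_span_singleton (hG : IsRightGoldie R) {c : R}
    (hc : IsLeftRegular c) : IsEssentialRightIdeal (Submodule.span Rᵐᵒᵖ {c}) := by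
  intro a ha
  by_contra! hdisj
  have hlt : ∀ i j, i < j → c ^ j * a ∈ Submodule.span Rᵐᵒᵖ {c ^ (i + 1)} := fun i j hij => by
    refine mem_span_singleton_iff_exists_mul.2 ⟨c ^ (j - (i + 1)) * a, ?_⟩
    rw [← mul_assoc, ← pow_add, Nat.add_sub_cancel' hij]
  have hK : ∀ i r, c ^ i * a * r ∈ Submodule.span Rᵐᵒᵖ {c ^ (i + 1)} → c ^ i * a * r = 0 := by
    intro i r h
    obtain ⟨s, hs⟩ := mem_span_singleton_iff_exists_mul.1 h
    have : a * r = c * s := hc.pow i <| show c ^ i * (a * r) = c ^ i * (c * s) by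
      rw [← mul_assoc, ← mul_assoc, ← pow_succ, hs]
    rw [mul_assoc, hdisj r (this ▸ mem_span_singleton_iff_exists_mul.2 ⟨s, rfl⟩), mul_zero]
  obtain ⟨n, hn⟩ := hG.exists_eq_zero_of_triangular hlt hK
  exact ha (isLeftRegular_iff_right_eq_zero_of_mul.1 (hc.pow n) a hn)

theorem isNilpotent_of_isEssentialRightIdeal (hG : IsRightGoldie R) {x : R}
    (hx : IsEssentialRightIdeal (rightAnnihilator {x})) : IsNilpotent x := by
  obtain ⟨N, hN⟩ := hG.exists_rightAnnihilator_pow_eq x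
  refine ⟨N, by_contra fun h => ?_⟩
  obtain ⟨r, hr, hr0⟩ := hx _ h
  have : r ∈ rightAnnihilator {x ^ (N + 1)} := by simpa [pow_succ', mul_assoc] using hr
  rw [hN (N + 1) N.le_succ] at this
  exact hr0 (by simpa using this)

theorem eq_zero_of_isEssentialRightIdeal (hG : IsRightGoldie R) (hP : IsPrimeRing' R) {x : R}
    (hx : IsEssentialRightIdeal (rightAnnihilator {x})) : x = 0 := by
  by_contra hx0
  obtain ⟨b, hb⟩ := hG.exists_not_isNilpotent_mul hP hx0
  refine hb (hG.isNilpotent_of_isEssentialRightIdeal ?_)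
  have hcomap : (rightAnnihilator {x}).comap (DistribSMul.toLinearMap Rᵐᵒᵖ R b) =
      rightAnnihilator {x * b} := by
    ext r
    simp [mul_assoc]
  exact hcomap ▸ isEssentialRightIdeal_comap_mulLeft fun a => hx (b * a)

theorem exists_isRegular_mem (hG : IsRightGoldie R) (hP : IsPrimeRing' R)
    {E : Submodule Rᵐᵒᵖ R} (hE : IsEssentialRightIdeal E) : ∃ c ∈ E, IsRegular c := by
  obtain ⟨c, hcE, hc⟩ := hG.exists_isLeftRegular_mem hP hE
  refine ⟨c, hcE, hc, isRightRegular_iff_left_eq_zero_of_mul.2 fun u hu => ?_⟩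
  have hle : Submodule.span Rᵐᵒᵖ {c} ≤ rightAnnihilator {u} :=
    Submodule.span_le.2 (by simpa using hu)
  exact hG.eq_zero_of_isEssentialRightIdeal hP fun a ha =>
    (hG.isEssentialRightIdeal_span_singleton hc a ha).imp fun r h => ⟨hle h.1, h.2⟩

theorem exists_ne_zero_forall_mul_mem_eq_zero (hG : IsRightGoldie R) (hP : IsPrimeRing' R)
    {J J' : Submodule Rᵐᵒᵖ R} (hsat : ∀ b s, IsRegular s → b * s ∈ J' → b ∈ J')
    (hlt : J' < J) : ∃ z ∈ J, z ≠ 0 ∧ ∀ r, z * r ∈ J' → z * r = 0 := by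
  obtain ⟨b, hbJ, hbJ'⟩ := SetLike.exists_of_lt hlt
  by_contra! H
  obtain ⟨s, hs, hs_reg⟩ := hG.exists_isRegular_mem hP
    (isEssentialRightIdeal_comap_mulLeft fun a hba => H (b * a) (J.smul_mem (op a) hbJ) hba)
  exact hbJ' (hsat b s hs_reg hs)

theorem not_strictAnti (hG : IsRightGoldie R) (hP : IsPrimeRing' R)
    {J : ℕ → Submodule Rᵐᵒᵖ R} (hsat : ∀ n b s, IsRegular s → b * s ∈ J n → b ∈ J n) :
    ¬StrictAnti J := by
  intro hJ
  choose z hzJ hz0 hz using fun n =>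
    hG.exists_ne_zero_forall_mul_mem_eq_zero hP (hsat (n + 1)) (hJ n.lt_succ_self)
  obtain ⟨n, hn⟩ := hG.exists_eq_zero_of_triangular (K := fun n => J (n + 1)) (w := z)
    (fun i j hij => hJ.antitone hij (hzJ j)) hz
  exact hz0 n hn

end IsRightGoldie

section QuotientRing

variable {R Q : Type*} [Ring R] [Ring Q]

/-- Right ideals of `Q` appear as left ideals of `Qᵐᵒᵖ`, the form in which
`IsArtinianRing Qᵐᵒᵖ` sees them. -/
def RingHom.comapRightIdeal (g : R →+* Q) (I : Submodule Qᵐᵒᵖ Qᵐᵒᵖ) : Submodule Rᵐᵒᵖ R where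
  carrier := {b | MulOpposite.op (g b) ∈ I}
  add_mem' hx hy := by simpa using I.add_mem hx hy
  zero_mem' := by simp
  smul_mem' c x hx := by simpa using I.smul_mem (MulOpposite.op (g c.unop)) hx

theorem RingHom.mem_comapRightIdeal_of_mul_mem {g : R →+* Q} {I : Submodule Qᵐᵒᵖ Qᵐᵒᵖ}
    {b s : R} (hs : IsUnit (g s)) (h : b * s ∈ g.comapRightIdeal I) :
    b ∈ g.comapRightIdeal I := by
  obtain ⟨u, hu⟩ := hs
  have hb : MulOpposite.op (g b) = MulOpposite.op (↑u⁻¹ : Q) * MulOpposite.op (g (b * s)) := by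
    rw [← op_mul, map_mul, ← hu, mul_assoc, Units.mul_inv, mul_one]
  show MulOpposite.op (g b) ∈ I
  rw [hb]
  exact I.smul_mem _ h

theorem IsClassicalRightQuotientRing.strictMono_comapRightIdeal {g : R →+* Q}
    (hQ : IsClassicalRightQuotientRing g) : StrictMono g.comapRightIdeal := by
  intro I I' hlt
  refine lt_of_le_not_ge (fun b hb => hlt.le hb) fun hle => hlt.not_ge fun x hx => ?_
  obtain ⟨a, s, hs, hxs⟩ := hQ.2.2 (unop x)
  obtain ⟨u, hu⟩ := hQ.2.1 s hs
  have ha : op (g a) ∈ I' := by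
    rw [← hxs, op_mul, op_unop]
    exact I'.smul_mem _ hx
  have hx' : x = op (↑u⁻¹ : Q) * op (g a) := by
    rw [← op_mul, ← hxs, ← hu, mul_assoc, Units.mul_inv, mul_one, op_unop]
  rw [hx']
  exact I.smul_mem _ (hle ha)

theorem IsClassicalRightQuotientRing.isArtinianRing_op (hG : IsRightGoldie R)
    (hP : IsPrimeRing' R) {g : R →+* Q} (hQ : IsClassicalRightQuotientRing g) :
    IsArtinianRing Qᵐᵒᵖ := by
  rw [IsArtinianRing, isArtinian_iff, RelEmbedding.wellFounded_iff_isEmpty]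
  refine ⟨fun I => hG.not_strictAnti hP (J := fun n => g.comapRightIdeal (I n))
    (fun n b s hs => g.mem_comapRightIdeal_of_mul_mem (hQ.2.1 s hs))
    (hQ.strictMono_comapRightIdeal.comp_strictAnti fun m n h => I.map_rel_iff.2 h)⟩

end QuotientRing

theorem Submodule.exists_mul_eq_of_isUnit {S Q : Type*} [Ring S] [Ring Q] [Module S Q]
    [SMulCommClass Q S Q] {D : Submodule S Q} [IsArtinian S D] {u : Q} (hu : IsUnit u)
    (hD : ∀ x ∈ D, u * x ∈ D) {x : Q} (hx : x ∈ D) : ∃ y ∈ D, u * y = x := by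
  let φ : D →ₗ[S] D := (DistribSMul.toLinearMap S Q u).restrict hD
  have hφ : Function.Injective φ := fun y z h =>
    Subtype.ext (hu.mul_left_cancel (congrArg Subtype.val h))
  obtain ⟨y, hy⟩ := IsArtinian.surjective_of_injective_endomorphism φ hφ ⟨x, hx⟩
  exact ⟨y, y.2, congrArg Subtype.val hy⟩

theorem IsClassicalRightQuotientRing.eq_top_of_fg {A Q S : Type*} [Ring A] [Ring Q] [Ring S]
    [IsArtinianRing S] [Module S Q] [SMulCommClass Q S Q] {f : A →+* Q}
    (hf : IsClassicalRightQuotientRing f) {D : Submodule S Q} (hD : D.FG) (hone : 1 ∈ D)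
    (hmul : ∀ a, ∀ x ∈ D, f a * x ∈ D) : D = ⊤ := by
  have : IsArtinian S D := isArtinian_of_fg_of_artinian D hD
  refine eq_top_iff.2 fun q _ => ?_
  obtain ⟨a, s, hs, hq⟩ := hf.2.2 q
  obtain ⟨y, hy, hsy⟩ := Submodule.exists_mul_eq_of_isUnit (hf.2.1 s hs) (hmul s) hone
  have : q = f a * y := by rw [← hq, mul_assoc, hsy, mul_one]
  exact this ▸ hmul a y hy

theorem fract_fg_of_fg_general
    (k : Type*) [Field k]
    {A : Type*} [Ring A] [Algebra k A] (B : Subalgebra k A)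
    (hB : IsPrimeRing' B)
    (hBG : IsRightGoldie B)
    -- `A` is a finitely generated right `B`-module
    (hfg : ∃ t : Finset A, ∀ a : A, ∃ c : A → B, a = ∑ x ∈ t, x * (c x : A))
    -- the Goldie quotient rings of `A` and of `B`
    {QA : Type*} [Ring QA] [Algebra k QA] (f : A →ₐ[k] QA)
    (hQA : IsClassicalRightQuotientRing (f : A →+* QA))
    {QB : Type*} [Ring QB] [Algebra k QB] (g : B →ₐ[k] QB)
    (hQB : IsClassicalRightQuotientRing (g : B →+* QB))
    -- the induced embedding `Fract(B) → Fract(A)`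
    (h : QB →ₐ[k] QA) (hcomp : ∀ b : B, h (g b) = f (b : A)) :
    ∃ t : Finset QA, ∀ x : QA, ∃ c : QA → QB, x = ∑ y ∈ t, y * h (c y) := by
  classical
  obtain ⟨t, ht⟩ := hfg
  let _ : Module QBᵐᵒᵖ QA := Module.compHom QA (RingHom.op (h : QB →+* QA))
  have : SMulCommClass QA QBᵐᵒᵖ QA := ⟨fun a q x => (mul_assoc a x _).symm⟩
  have : IsArtinianRing QBᵐᵒᵖ := hQB.isArtinianRing_op hBG hB
  let D := Submodule.span QBᵐᵒᵖ (f '' t)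
  have hfD : ∀ a, f a ∈ D := fun a => by
    obtain ⟨c, hc⟩ := ht a
    rw [hc, map_sum]
    refine sum_mem fun x hx => ?_
    rw [map_mul, ← hcomp]
    exact D.smul_mem (op (g (c x))) (Submodule.subset_span ⟨x, hx, rfl⟩)
  have hmul : ∀ a, ∀ x ∈ D, f a * x ∈ D := fun a =>
    Submodule.span_le (p := D.comap (DistribSMul.toLinearMap QBᵐᵒᵖ QA (f a))).2
      (by rintro _ ⟨x, -, rfl⟩; simpa using hfD (a * x))
  have hD : D = ⊤ := hQA.eq_top_of_fg ⟨t.image f, by simp [D]⟩ (by simpa using hfD 1) hmul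
  refine ⟨t.image f, fun x => ?_⟩
  obtain ⟨μ, -, hμ⟩ := Submodule.mem_span_finset.1
    (by simp [D, hD] : x ∈ Submodule.span QBᵐᵒᵖ ↑(t.image f))
  exact ⟨fun y => (μ y).unop, hμ.symm⟩

/-- Lemma 6.2 of Goodearl–Launois–Lenagan (key step): let `B ⊆ A` be `k`-algebras which
are prime right Goldie rings, such that every regular element of `B` is regular in `A`,
and `A` is finitely generated as a right `B`-module. Then the right Goldie quotient ring
`Fract(A)` is finitely generated as a right module over `Fract(B)` (embedded in
`Fract(A)` via the natural map `h`). -/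
theorem fract_fg_of_fg
    (k : Type*) [Field k]
    {A : Type*} [Ring A] [Algebra k A] (B : Subalgebra k A)
    (hA : IsPrimeRing' A) (hB : IsPrimeRing' B)
    (hAG : IsRightGoldie A) (hBG : IsRightGoldie B)
    -- every regular element of `B` is regular in `A`
    (hreg : ∀ b : B, IsRegular b → IsRegular (b : A))
    -- `A` is a finitely generated right `B`-module
    (hfg : ∃ t : Finset A, ∀ a : A, ∃ c : A → B, a = ∑ x ∈ t, x * (c x : A))
    -- the Goldie quotient rings of `A` and of `B`
    {QA : Type*} [Ring QA] [Algebra k QA] (f : A →ₐ[k] QA)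
    (hQA : IsClassicalRightQuotientRing (f : A →+* QA))
    {QB : Type*} [Ring QB] [Algebra k QB] (g : B →ₐ[k] QB)
    (hQB : IsClassicalRightQuotientRing (g : B →+* QB))
    -- the induced embedding `Fract(B) → Fract(A)`
    (h : QB →ₐ[k] QA) (hcomp : ∀ b : B, h (g b) = f (b : A)) :
    ∃ t : Finset QA, ∀ x : QA, ∃ c : QA → QB, x = ∑ y ∈ t, y * h (c y) :=
  fract_fg_of_fg_general k B hB hBG hfg f hQA g hQB h hcomp
end

section
/- Let T be a quantum torus over k with exponent group ℤⁿ, Z ⊆ ℤⁿ the central exponent subgroup, and W ⊆ ℤⁿ a subgroup maximal with respect to W ∩ Z = 0. Let C = ⊕_{a ∈ W} k yᵃ, a sub-quantum-torus of T. Then the center of C equals k (i.e., C is central over k). -/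
/-! Let `x = ∑ cₐ yᵃ` be central in `C`. Commuting `x` with `yᵇ`, `b ∈ W`, and comparing
coefficients gives `λ(a, b) = 1` whenever `cₐ ≠ 0`; since `λ(a, ·)` is a character that also
kills `Z`, it kills `Z ⊕ W`. Maximality of `W` makes `ℤⁿ ⧸ (Z ⊕ W)` torsion, hence finite,
say of order `s`, so `λ(s a, ·) = λ(a, s ·) = 1`. Thus `s a ∈ Z ∩ W = 0`, so `a = 0` and
`x = c₀`. -/

namespace AddSubgroup

variable {G : Type*} [AddCommGroup G] {Z W : AddSubgroup G}

theorem exists_zsmul_mem_sup_of_maximal_disjoint (hWZ : W ⊓ Z = ⊥)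
    (hWmax : ∀ W' : AddSubgroup G, W ≤ W' → W' ⊓ Z = ⊥ → W' = W) (b : G) :
    ∃ m : ℤ, m ≠ 0 ∧ m • b ∈ Z ⊔ W := by
  by_contra! hb
  have hdisj : (W ⊔ zmultiples b) ⊓ Z = ⊥ := by
    refine eq_bot_iff.2 fun x hx => ?_
    obtain ⟨hxWb, hxZ⟩ := mem_inf.1 hx
    obtain ⟨w, hw, _, ⟨j, rfl⟩, rfl⟩ := mem_sup.1 hxWb
    beta_reduce at hxZ ⊢
    obtain rfl | hj := eq_or_ne j 0
    · rw [zero_zsmul, add_zero] at hxZ ⊢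
      exact hWZ ▸ mem_inf.2 ⟨hw, hxZ⟩
    · refine absurd ?_ (hb j hj)
      simpa using sub_mem (mem_sup_left hxZ) (mem_sup_right (S := Z) hw)
  refine hb 1 one_ne_zero (mem_sup_right ?_)
  rw [one_zsmul, ← hWmax _ le_sup_left hdisj]
  exact mem_sup_right (mem_zmultiples b)

theorem finiteIndex_sup_of_maximal_disjoint [AddGroup.FG G] (hWZ : W ⊓ Z = ⊥)
    (hWmax : ∀ W' : AddSubgroup G, W ≤ W' → W' ⊓ Z = ⊥ → W' = W) :
    (Z ⊔ W).FiniteIndex := by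
  refine finiteIndex_iff_finite_quotient.2 <| AddCommGroup.finite_of_fg_isAddTorsion _ fun q => ?_
  induction q using QuotientAddGroup.induction_on with | H b => ?_
  obtain ⟨m, hm, hmb⟩ := exists_zsmul_mem_sup_of_maximal_disjoint hWZ hWmax b
  exact isOfFinAddOrder_iff_zsmul_eq_zero.2
    ⟨m, hm, by rwa [← QuotientAddGroup.mk_zsmul, QuotientAddGroup.eq_zero_iff]⟩

end AddSubgroup

section MonomialAlgebra

variable {k T G : Type*} [Field k] {μ : G → G → kˣ}

/-- The paper's `λ_{a,b}`, characterised by `yᵃ yᵇ = λ_{a,b} yᵇ yᵃ`. -/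
def commPairing (μ : G → G → kˣ) (a b : G) : kˣ := μ a b * (μ b a)⁻¹

theorem commPairing_swap (a b : G) : commPairing μ b a = (commPairing μ a b)⁻¹ := by
  simp only [commPairing, mul_inv_rev, inv_inv]

theorem commPairing_eq_one_iff {a b : G} : commPairing μ a b = 1 ↔ (μ a b : k) = μ b a := by
  rw [commPairing, mul_inv_eq_one, Units.ext_iff]

variable [Ring T] [Algebra k T] [AddCommGroup G] {y : G → T}

theorem mul_ne_zero_of_twisted_mul (hmul : ∀ a b, y a * y b = (μ a b : k) • y (a + b))
    (hy : ∀ a, y a ≠ 0) (a b : G) : y a * y b ≠ 0 := by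
  rw [hmul]
  exact smul_ne_zero (μ a b).ne_zero (hy _)

theorem mul_eq_commPairing_smul (hmul : ∀ a b, y a * y b = (μ a b : k) • y (a + b)) (a b : G) :
    y a * y b = (commPairing μ a b : k) • (y b * y a) := by
  rw [hmul, hmul, add_comm b a, smul_smul, commPairing, Units.val_mul, Units.inv_mul_cancel_right]

theorem commPairing_eq_one_iff_commute (hmul : ∀ a b, y a * y b = (μ a b : k) • y (a + b))
    (hy : ∀ a, y a ≠ 0) {a b : G} : commPairing μ a b = 1 ↔ y a * y b = y b * y a := by
  rw [mul_eq_commPairing_smul hmul, Units.ext_iff, Units.val_one,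
    ← (smul_left_injective k (mul_ne_zero_of_twisted_mul hmul hy b a)).eq_iff, one_smul]

theorem commPairing_add_right (hmul : ∀ a b, y a * y b = (μ a b : k) • y (a + b))
    (hy : ∀ a, y a ≠ 0) (a b c : G) :
    commPairing μ a (b + c) = commPairing μ a b * commPairing μ a c := by
  have hbc : y b * y c = (μ b c : k) • y (b + c) := hmul b c
  have hne : y b * y c * y a ≠ 0 := by
    rw [hbc, smul_mul_assoc]
    exact smul_ne_zero (μ b c).ne_zero (mul_ne_zero_of_twisted_mul hmul hy _ _)
  refine Units.ext (smul_left_injective k hne ?_)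
  calc (commPairing μ a (b + c) : k) • (y b * y c * y a)
      = y a * (y b * y c) := by
        rw [hbc, mul_smul_comm, mul_eq_commPairing_smul hmul, smul_mul_assoc, smul_comm]
    _ = ((commPairing μ a b * commPairing μ a c : kˣ) : k) • (y b * y c * y a) := by
        rw [← mul_assoc, mul_eq_commPairing_smul hmul a b, smul_mul_assoc, mul_assoc,
          mul_eq_commPairing_smul hmul a c, mul_smul_comm, smul_smul, ← mul_assoc,
          Units.val_mul, mul_comm (commPairing μ a b : k)]

/-- The paper's `λ_{a,b}`, characterised by `yᵃ yᵇ = λ_{a,b} yᵇ yᵃ`. -/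
def commPairingHom (hmul : ∀ a b, y a * y b = (μ a b : k) • y (a + b)) (hy : ∀ a, y a ≠ 0)
    (a : G) : G →+ Additive kˣ :=
  AddMonoidHom.mk' (fun b => Additive.ofMul (commPairing μ a b))
    (commPairing_add_right hmul hy a)

theorem commPairing_nsmul_left (hmul : ∀ a b, y a * y b = (μ a b : k) • y (a + b))
    (hy : ∀ a, y a ≠ 0) (s : ℕ) (a b : G) :
    commPairing μ (s • a) b = commPairing μ a (s • b) := by
  have h (a b : G) : commPairing μ a (s • b) = commPairing μ a b ^ s :=
    congrArg Additive.toMul (map_nsmul (commPairingHom hmul hy a) s b)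
  rw [commPairing_swap, h, commPairing_swap, h, inv_pow, inv_inv]

theorem mem_ker_commPairingHom (hmul : ∀ a b, y a * y b = (μ a b : k) • y (a + b))
    (hy : ∀ a, y a ≠ 0) {a b : G} : b ∈ (commPairingHom hmul hy a).ker ↔ commPairing μ a b = 1 :=
  AddMonoidHom.mem_ker.trans ofMul_eq_zero

theorem mem_center_of_forall_commPairing_eq_one (hspan : Submodule.span k (Set.range y) = ⊤)
    (hmul : ∀ a b, y a * y b = (μ a b : k) • y (a + b)) (hy : ∀ a, y a ≠ 0) {c : G}
    (hc : ∀ b, commPairing μ c b = 1) : y c ∈ Subalgebra.center k T := by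
  have hle : Submodule.span k (Set.range y) ≤
      Subalgebra.toSubmodule (Subalgebra.centralizer k {y c}) := by
    refine Submodule.span_le.2 ?_
    rintro _ ⟨b, rfl⟩ _ rfl
    exact (commPairing_eq_one_iff_commute hmul hy).1 (hc b)
  rw [hspan] at hle
  exact Subalgebra.mem_center_iff.2 fun t => ((hle Submodule.mem_top) (y c) rfl).symm

theorem commPairing_eq_one_of_commute_linearCombination (hindep : LinearIndependent k y)
    (hmul : ∀ a b, y a * y b = (μ a b : k) • y (a + b)) {l : G →₀ k} {b : G}
    (h : Finsupp.linearCombination k y l * y b = y b * Finsupp.linearCombination k y l)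
    {a : G} (ha : a ∈ l.support) : commPairing μ a b = 1 := by
  have hshift : LinearIndependent k fun a => y (a + b) :=
    hindep.comp (· + b) (add_left_injective b)
  have hsum : ∑ a ∈ l.support, (l a * ((μ a b : k) - μ b a)) • y (a + b) = 0 := by
    rw [← sub_eq_zero.2 h, Finsupp.linearCombination_apply, Finsupp.sum, Finset.sum_mul,
      Finset.mul_sum, ← Finset.sum_sub_distrib]
    refine Finset.sum_congr rfl fun a _ => ?_
    rw [smul_mul_assoc, mul_smul_comm, hmul, hmul, add_comm b a, smul_smul, smul_smul,
      ← sub_smul, mul_sub]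
  have hcoeff := linearIndependent_iff'.1 hshift _ _ hsum a ha
  rw [commPairing_eq_one_iff]
  exact sub_eq_zero.1 ((mul_eq_zero.1 hcoeff).resolve_left (Finsupp.mem_support_iff.1 ha))

theorem eq_zero_of_forall_commPairing_eq_one [IsAddTorsionFree G]
    (hspan : Submodule.span k (Set.range y) = ⊤)
    (hmul : ∀ a b, y a * y b = (μ a b : k) • y (a + b)) (hy : ∀ a, y a ≠ 0)
    {Z W : AddSubgroup G} (hZ : ∀ a, a ∈ Z ↔ y a ∈ Subalgebra.center k T) (hWZ : W ⊓ Z = ⊥)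
    [(Z ⊔ W).FiniteIndex] {a : G} (ha : a ∈ W) (haW : ∀ b ∈ W, commPairing μ a b = 1) :
    a = 0 := by
  have hker : Z ⊔ W ≤ (commPairingHom hmul hy a).ker := by
    refine sup_le (fun z hz => ?_) (fun b hb => ?_) <;> rw [mem_ker_commPairingHom]
    · exact (commPairing_eq_one_iff_commute hmul hy).2
        (Subalgebra.mem_center_iff.1 ((hZ z).1 hz) (y a))
    · exact haW b hb
  have hsaZ : (Z ⊔ W).index • a ∈ Z := (hZ _).2 <|
    mem_center_of_forall_commPairing_eq_one hspan hmul hy fun b => by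
      rw [commPairing_nsmul_left hmul hy, ← mem_ker_commPairingHom hmul hy]
      exact hker (AddSubgroup.nsmul_index_mem _ b)
  have hsa : (Z ⊔ W).index • a = 0 := by
    simpa [hWZ] using AddSubgroup.mem_inf.2 ⟨AddSubgroup.nsmul_mem W ha _, hsaZ⟩
  exact (smul_eq_zero.1 hsa).resolve_left AddSubgroup.FiniteIndex.index_ne_zero

end MonomialAlgebra

/-- Part of the proof of Proposition 6.3 of Goodearl–Launois–Lenagan. Let
`T = O_q((k*)ⁿ)` be a quantum torus over a field `k` (with basis the monomials `yᵃ`,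
`a ∈ ℤⁿ`, `y⁰ = 1` and `yᵃyᵇ = μ(a,b) y^{a+b}` with `μ(a,b) ∈ k*`). Let `Z ⊆ ℤⁿ` be the
subgroup of central exponents, and let `W ⊆ ℤⁿ` be a subgroup maximal with respect to
`W ∩ Z = 0`. Let `C = ⊕_{a ∈ W} k yᵃ`, the sub-quantum-torus of `T` spanned by the
monomials with exponents in `W`. Then the center of `C` is exactly `k`. -/
theorem sub_quantum_torus_center_trivial
    (k : Type*) [Field k] (n : ℕ)
    (T : Type*) [Ring T] [Algebra k T]
    (y : (Fin n → ℤ) → T)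
    (hindep : LinearIndependent k y)
    (hspan : Submodule.span k (Set.range y) = ⊤)
    (hone : y 0 = 1)
    (μ : (Fin n → ℤ) → (Fin n → ℤ) → kˣ)
    (hmul : ∀ a b, y a * y b = (μ a b : k) • y (a + b))
    -- the subgroup of central exponents
    (Z : AddSubgroup (Fin n → ℤ))
    (hZ : ∀ a, a ∈ Z ↔ y a ∈ Subalgebra.center k T)
    -- `W` is maximal with respect to `W ∩ Z = 0`
    (W : AddSubgroup (Fin n → ℤ))
    (hWZ : W ⊓ Z = ⊥)
    (hWmax : ∀ W' : AddSubgroup (Fin n → ℤ), W ≤ W' → W' ⊓ Z = ⊥ → W' = W)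
    -- the sub-quantum-torus `C` spanned by the monomials with exponents in `W`
    (C : Subalgebra k T)
    (hC : (C : Set T) = ↑(Submodule.span k (y '' (W : Set (Fin n → ℤ))))) :
    ∀ x ∈ C, (∀ c ∈ C, x * c = c * x) → ∃ r : k, x = algebraMap k T r := by
  intro x hxC hxcomm
  have hy : ∀ a, y a ≠ 0 := hindep.ne_zero
  have hmemC : ∀ t, t ∈ C ↔ t ∈ Submodule.span k (y '' W) := fun t => by
    rw [← SetLike.mem_coe, hC, SetLike.mem_coe]
  obtain ⟨l, hlW, rfl⟩ := (Finsupp.mem_span_image_iff_linearCombination k).1 ((hmemC _).1 hxC)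
  have := AddSubgroup.finiteIndex_sup_of_maximal_disjoint hWZ hWmax
  have hsupp : l.support ⊆ {0} := fun a ha =>
    Finset.mem_singleton.2 <| eq_zero_of_forall_commPairing_eq_one hspan hmul hy hZ hWZ (hlW ha)
      fun b hb => commPairing_eq_one_of_commute_linearCombination hindep hmul
        (hxcomm _ ((hmemC _).2 (Submodule.subset_span ⟨b, hb, rfl⟩))) ha
  rw [Finsupp.support_subset_singleton.1 hsupp, Finsupp.linearCombination_single, hone]
  exact ⟨l 0, (Algebra.algebraMap_eq_smul_one _).symm⟩
end

section
/- Let T be a quantum torus over a field k. Then extension and contraction give mutually inverse, inclusion-preserving bijections between the set of ideals of the center Z(T) and the set of two-sided ideals of T: I ↦ IT and J ↦ J ∩ Z(T). In particular, if m is a maximal ideal of Z(T) then mT is a maximal two-sided ideal of T. -/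
/-!
Conjugation by the invertible monomial `y c` multiplies `y a` by the scalar `μ(c,a)/μ(a,c)`, so
`T` is the direct sum of the simultaneous eigenspaces ("weight spaces") of these conjugations,
indexed by the functions `c ↦ μ(c,a)/μ(a,c)`; the weight space of the trivial weight is the
centre. A two-sided ideal is stable under conjugation, and an induction on the number of weights
occurring in an element shows that it contains every weight component of its elements.
Multiplying the component of weight `c ↦ μ(c,a)/μ(a,c)` by `(y a)⁻¹` makes it central, so `J`
is generated by `J ∩ Z(T)`. Conversely, the projection onto the trivial weight is a `Z(T)`-linear
retraction `T → Z(T)`, which gives `IT ∩ Z(T) = I`. Extension and contraction are therefore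
inverse order isomorphisms, and maximal ideals correspond to maximal ideals.
-/

open scoped Classical in
theorem Finsupp.filter_mem_of_forall_pointwise_smul_mem {ι C k : Type*} [Field k]
    {W : Submodule k (ι →₀ k)} (χ : ι → C → k)
    (hW : ∀ c, ∀ f ∈ W, (fun a => χ a c) • f ∈ W) {f : ι →₀ k} (hf : f ∈ W)
    (v : C → k) :
    f.filter (fun a => χ a = v) ∈ W := by
  induction hN : (f.support.image χ).card using Nat.strong_induction_on generalizing f with
  | _ N ih =>
  by_cases hall : ∀ a, f a ≠ 0 → χ a = v
  · rwa [(Finsupp.filter_eq_self_iff _ _).mpr hall]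
  push Not at hall
  obtain ⟨a₁, ha₁, hne⟩ := hall
  obtain ⟨c, hc⟩ := Function.ne_iff.mp hne
  -- `g` loses the weight `χ a₁` while its `v`-part is rescaled by `v c - χ a₁ c ≠ 0`
  set g := (fun a => χ a c) • f - χ a₁ c • f
  have hg_apply (a : ι) : g a = (χ a c - χ a₁ c) * f a := by simp [g]; ring
  have hlt : (g.support.image χ).card < N := by
    refine hN ▸ Finset.card_lt_card ((Finset.ssubset_iff_of_subset ?_).mpr ?_)
    · exact Finset.image_subset_image fun a => by simp_all
    · refine ⟨χ a₁, Finset.mem_image_of_mem _ (by simpa using ha₁), ?_⟩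
      simp only [Finset.mem_image, Finsupp.mem_support_iff, hg_apply, not_exists, not_and]
      intro a h he
      exact h (by rw [he, sub_self, zero_mul])
  have hfilter :
      g.filter (fun a => χ a = v) = (v c - χ a₁ c) • f.filter (fun a => χ a = v) := by
    ext a
    simp only [Finsupp.filter_apply, Finsupp.smul_apply, hg_apply, smul_eq_mul]
    split_ifs with h
    · rw [h]
    · rw [mul_zero]
  have := ih _ hlt (W.sub_mem (hW c f hf) (W.smul_mem _ hf)) rfl
  rwa [hfilter, Submodule.smul_mem_iff _ (sub_ne_zero.mpr (Ne.symm hc))] at this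

open Module
open scoped Ring

namespace QuantumTorus

open scoped Classical

variable {k G T : Type*} [Field k] [Ring T] [Algebra k T]

def commChar (μ : G → G → kˣ) (a : G) : G → k := fun c => (μ c a : k) / μ a c

lemma commChar_ne_zero (μ : G → G → kˣ) (a c : G) : commChar μ a c ≠ 0 :=
  div_ne_zero (Units.ne_zero _) (Units.ne_zero _)

variable (b : Basis G k T) {μ : G → G → kˣ}

def weightSpace (v : G → k) : Submodule k T where
  carrier := {x | ∀ c, b c * x = v c • (x * b c)}
  add_mem' {x x'} hx hx' c := by rw [mul_add, hx, hx', add_mul, smul_add]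
  zero_mem' c := by rw [mul_zero, zero_mul, smul_zero]
  smul_mem' r x hx c := by rw [mul_smul_comm, hx, smul_mul_assoc, smul_comm]

variable {b}

lemma mul_mem_weightSpace {v v' : G → k} {x x' : T} (hx : x ∈ weightSpace b v)
    (hx' : x' ∈ weightSpace b v') : x * x' ∈ weightSpace b (v * v') := fun c => by
  rw [← mul_assoc, hx, smul_mul_assoc, mul_assoc, hx', mul_smul_comm, smul_smul, mul_assoc,
    Pi.mul_apply]

lemma inverse_mem_weightSpace {v : G → k} (hv : ∀ c, v c ≠ 0) {u : T} (hu : IsUnit u)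
    (hmem : u ∈ weightSpace b v) : u⁻¹ʳ ∈ weightSpace b v⁻¹ := fun c => by
  have h := congrArg (fun t => u⁻¹ʳ * t * u⁻¹ʳ) (hmem c)
  simp only [Ring.inverse_mul_cancel_left _ _ hu, mul_smul_comm, smul_mul_assoc,
    mul_assoc, Ring.mul_inverse_cancel _ hu, mul_one] at h
  rw [Pi.inv_apply, h, smul_smul, inv_mul_cancel₀ (hv c), one_smul]

lemma mem_weightSpace_one_iff {x : T} : x ∈ weightSpace b 1 ↔ x ∈ Subalgebra.center k T := by
  refine ⟨fun hx => Subalgebra.mem_center_iff.mpr fun g => ?_, fun hx c => ?_⟩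
  · have hspan : Submodule.span k (Set.range b) ≤
        Subalgebra.toSubmodule (Subalgebra.centralizer k {x}) := by
      refine Submodule.span_le.mpr ?_
      rintro _ ⟨c, rfl⟩
      exact (Subalgebra.mem_centralizer_iff k).mpr fun _ h => by
        rw [Set.mem_singleton_iff.mp h, hx c, Pi.one_apply, one_smul]
    exact ((Subalgebra.mem_centralizer_iff k).mp (hspan (b.mem_span g)) x rfl).symm
  · rw [Pi.one_apply, one_smul, Subalgebra.mem_center_iff.mp hx]

lemma mul_mul_inverse_of_mem_weightSpace {v : G → k} {x : T} {c : G} (hc : IsUnit (b c))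
    (hx : x ∈ weightSpace b v) : b c * x * (b c)⁻¹ʳ = v c • x := by
  rw [hx c, smul_mul_assoc, Ring.mul_inverse_cancel_right _ _ hc]

variable (b μ) in
noncomputable def weightProj (v : G → k) : T →ₗ[k] T where
  toFun x := b.repr.symm ((b.repr x).filter fun a => commChar μ a = v)
  map_add' x x' := by simp [Finsupp.filter_add]
  map_smul' r x := by simp [Finsupp.filter_smul]

lemma repr_weightProj (v : G → k) (x : T) :
    b.repr (weightProj b μ v x) = (b.repr x).filter fun a => commChar μ a = v := by
  simp [weightProj]

lemma sum_weightProj (x : T) :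
    ∑ v ∈ (b.repr x).support.image (commChar μ), weightProj b μ v x = x := by
  apply b.repr.injective
  ext a
  simp only [map_sum, repr_weightProj, Finsupp.finsetSum_apply, Finsupp.filter_apply,
    Finset.sum_ite_eq]
  split_ifs with h
  · rfl
  · exact (Finsupp.notMem_support_iff.mp fun ha => h (Finset.mem_image_of_mem _ ha)).symm

variable [AddCommGroup G]

lemma basis_mem_weightSpace (hmul : ∀ a c, b a * b c = (μ a c : k) • b (a + c)) (a : G) :
    b a ∈ weightSpace b (commChar μ a) := fun c => by
  rw [hmul, hmul, smul_smul, commChar, div_mul_cancel₀ _ (Units.ne_zero _), add_comm]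

lemma isUnit_basis (hmul : ∀ a c, b a * b c = (μ a c : k) • b (a + c)) (hone : b 0 = 1)
    (a : G) : IsUnit (b a) := by
  have hr : b a * ((μ a (-a) : k)⁻¹ • b (-a)) = 1 := by
    rw [mul_smul_comm, hmul, smul_smul, inv_mul_cancel₀ (Units.ne_zero _), add_neg_cancel,
      one_smul, hone]
  have hl : ((μ (-a) a : k)⁻¹ • b (-a)) * b a = 1 := by
    rw [smul_mul_assoc, hmul, smul_smul, inv_mul_cancel₀ (Units.ne_zero _), neg_add_cancel,
      one_smul, hone]
  exact ⟨⟨b a, _, hr, left_inv_eq_right_inv hl hr ▸ hl⟩, rfl⟩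

lemma repr_mul_mul_inverse (hmul : ∀ a c, b a * b c = (μ a c : k) • b (a + c))
    (hone : b 0 = 1) (c : G) (x : T) :
    b.repr (b c * x * (b c)⁻¹ʳ) = (fun a => commChar μ a c) • b.repr x := by
  ext a
  have h : (b.coord a).comp (LinearMap.mulLeftRight k (b c, (b c)⁻¹ʳ)) =
      commChar μ a c • b.coord a := by
    refine b.ext fun a' => ?_
    simp only [LinearMap.comp_apply, LinearMap.mulLeftRight_apply, LinearMap.smul_apply,
      Basis.coord_apply, mul_mul_inverse_of_mem_weightSpace (isUnit_basis hmul hone c)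
        (basis_mem_weightSpace hmul a'), map_smul, Basis.repr_self, smul_eq_mul]
    by_cases h : a' = a
    · rw [h]
    · simp [h]
  exact LinearMap.congr_fun h x

lemma repr_eq_zero_of_mem_weightSpace (hmul : ∀ a c, b a * b c = (μ a c : k) • b (a + c))
    (hone : b 0 = 1) {v : G → k} {x : T} (hx : x ∈ weightSpace b v) {a : G}
    (ha : commChar μ a ≠ v) : b.repr x a = 0 := by
  by_contra hxa
  refine ha (funext fun c => mul_right_cancel₀ hxa ?_)
  have h := congrArg (· a) (repr_mul_mul_inverse hmul hone c x)
  simp only [mul_mul_inverse_of_mem_weightSpace (isUnit_basis hmul hone c) hx, map_smul,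
    Finsupp.smul_apply, Finsupp.coe_pointwise_smul, smul_eq_mul] at h
  exact h.symm

lemma weightProj_mem_weightSpace (hmul : ∀ a c, b a * b c = (μ a c : k) • b (a + c))
    (v : G → k) (x : T) : weightProj b μ v x ∈ weightSpace b v := by
  rw [← b.repr.symm_apply_apply (weightProj b μ v x), repr_weightProj, Basis.repr_symm_apply,
    Finsupp.linearCombination_apply]
  refine Submodule.finsuppSum_mem _ _ _ _ fun a ha => Submodule.smul_mem _ _ ?_
  have hav : commChar μ a = v := by_contra fun h => ha (Finsupp.filter_apply_neg _ _ h)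
  exact hav ▸ basis_mem_weightSpace hmul a

lemma weightProj_of_mem_weightSpace (hmul : ∀ a c, b a * b c = (μ a c : k) • b (a + c))
    (hone : b 0 = 1) {v v' : G → k} {x : T} (hx : x ∈ weightSpace b v') :
    weightProj b μ v x = if v' = v then x else 0 := by
  apply b.repr.injective
  rw [repr_weightProj]
  split_ifs with h
  · subst h
    exact (Finsupp.filter_eq_self_iff _ _).mpr fun a ha =>
      not_not.mp fun h' => ha (repr_eq_zero_of_mem_weightSpace hmul hone hx h')
  · rw [map_zero]
    exact (Finsupp.filter_eq_zero_iff _ _).mpr fun a ha =>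
      repr_eq_zero_of_mem_weightSpace hmul hone hx fun h' => h (h'.symm.trans ha)

lemma weightProj_basis (hmul : ∀ a c, b a * b c = (μ a c : k) • b (a + c)) (hone : b 0 = 1)
    (v : G → k) (a : G) : weightProj b μ v (b a) = if commChar μ a = v then b a else 0 :=
  weightProj_of_mem_weightSpace hmul hone (basis_mem_weightSpace hmul a)

lemma weightProj_mul_of_mem_center (hmul : ∀ a c, b a * b c = (μ a c : k) • b (a + c))
    (hone : b 0 = 1) (v : G → k) {z : T} (hz : z ∈ Subalgebra.center k T) (x : T) :
    weightProj b μ v (z * x) = z * weightProj b μ v x := by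
  have h : weightProj b μ v ∘ₗ LinearMap.mulLeft k z =
      LinearMap.mulLeft k z ∘ₗ weightProj b μ v := by
    refine b.ext fun a => ?_
    have hza : z * b a ∈ weightSpace b (commChar μ a) := by
      simpa using mul_mem_weightSpace (mem_weightSpace_one_iff.mpr hz)
        (basis_mem_weightSpace hmul a)
    simp only [LinearMap.comp_apply, LinearMap.mulLeft_apply,
      weightProj_of_mem_weightSpace hmul hone hza, weightProj_basis hmul hone]
    split_ifs <;> simp
  exact LinearMap.congr_fun h x

lemma weightProj_mem (hmul : ∀ a c, b a * b c = (μ a c : k) • b (a + c)) (hone : b 0 = 1)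
    (J : TwoSidedIdeal T) (v : G → k) {x : T} (hx : x ∈ J) : weightProj b μ v x ∈ J := by
  let W : Submodule k (G →₀ k) :=
    (J.asIdeal.restrictScalars k).comap (b.repr.symm : (G →₀ k) →ₗ[k] T)
  have hW (c : G) (f : G →₀ k) (hf : f ∈ W) : (fun a => commChar μ a c) • f ∈ W := by
    have h :
        b.repr.symm ((fun a => commChar μ a c) • f) = b c * b.repr.symm f * (b c)⁻¹ʳ := by
      rw [LinearEquiv.symm_apply_eq, repr_mul_mul_inverse hmul hone, b.repr.apply_symm_apply]
    show b.repr.symm _ ∈ J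
    rw [h]
    exact J.mul_mem_right _ _ (J.mul_mem_left _ _ hf)
  exact Finsupp.filter_mem_of_forall_pointwise_smul_mem (W := W) (commChar μ) hW
    (f := b.repr x) (by simpa [W] using hx) v

lemma mem_span_inter_center_of_mem_weightSpace
    (hmul : ∀ a c, b a * b c = (μ a c : k) • b (a + c)) (hone : b 0 = 1)
    (J : TwoSidedIdeal T) {a : G} {w : T} (hwJ : w ∈ J)
    (hw : w ∈ weightSpace b (commChar μ a)) :
    w ∈ TwoSidedIdeal.span ((J : Set T) ∩ Subalgebra.center k T) := by
  have hunit := isUnit_basis hmul hone a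
  have hweight : (commChar μ a)⁻¹ * commChar μ a = 1 :=
    funext fun c => inv_mul_cancel₀ (commChar_ne_zero μ a c)
  have hcenter : (b a)⁻¹ʳ * w ∈ Subalgebra.center k T := by
    refine mem_weightSpace_one_iff.mp (hweight ▸ mul_mem_weightSpace ?_ hw)
    exact inverse_mem_weightSpace (commChar_ne_zero μ a) hunit (basis_mem_weightSpace hmul a)
  rw [← Ring.mul_inverse_cancel_left _ w hunit]
  exact TwoSidedIdeal.mul_mem_left _ _ _
    (TwoSidedIdeal.subset_span ⟨J.mul_mem_left _ _ hwJ, hcenter⟩)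

theorem eq_span_inter_center (hmul : ∀ a c, b a * b c = (μ a c : k) • b (a + c))
    (hone : b 0 = 1) (J : TwoSidedIdeal T) :
    J = TwoSidedIdeal.span ((J : Set T) ∩ Subalgebra.center k T) := by
  refine le_antisymm (fun x hx => ?_) (TwoSidedIdeal.span_le.mpr Set.inter_subset_left)
  rw [← sum_weightProj (b := b) (μ := μ) x]
  refine sum_mem fun v hv => ?_
  obtain ⟨a, -, rfl⟩ := Finset.mem_image.mp hv
  exact mem_span_inter_center_of_mem_weightSpace hmul hone J (weightProj_mem hmul hone J _ hx)
    (weightProj_mem_weightSpace hmul _ x)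

theorem mem_of_coe_mem_span (hmul : ∀ a c, b a * b c = (μ a c : k) • b (a + c))
    (hone : b 0 = 1) (I : Ideal (Subalgebra.center k T)) {z : Subalgebra.center k T}
    (hz : (z : T) ∈ TwoSidedIdeal.span (Subtype.val '' (I : Set (Subalgebra.center k T)))) :
    z ∈ I := by
  let π : T →+ Subalgebra.center k T := AddMonoidHom.mk'
    (fun x => ⟨weightProj b μ 1 x,
      mem_weightSpace_one_iff.mp (weightProj_mem_weightSpace hmul 1 x)⟩)
    fun x x' => Subtype.ext (map_add _ x x')
  have hπ (w : Subalgebra.center k T) (t : T) : π (w * t) = w * π t :=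
    Subtype.ext (weightProj_mul_of_mem_center hmul hone 1 w.2 t)
  have hspan (x : T)
      (hx : x ∈ TwoSidedIdeal.span (Subtype.val '' (I : Set (Subalgebra.center k T)))) :
      π x ∈ I := by
    refine (AddSubgroup.closure_le (K := I.toAddSubgroup.comap π)).mpr ?_
      (TwoSidedIdeal.mem_span_iff_mem_addSubgroup_closure.mp hx)
    rintro _ ⟨_, ⟨t, -, _, ⟨w, hw, rfl⟩, rfl⟩, s, -, rfl⟩
    show π (t * w * s) ∈ I
    rw [Subalgebra.mem_center_iff.mp w.2 t, mul_assoc, hπ]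
    exact I.mul_mem_right _ hw
  have hπz : π z = z := Subtype.ext <|
    (weightProj_of_mem_weightSpace hmul hone (mem_weightSpace_one_iff.mpr z.2)).trans
      (if_pos rfl)
  simpa [hπz] using hspan z hz

lemma image_comap_val_eq_inter_center (J : TwoSidedIdeal T) :
    Subtype.val '' (J.asIdeal.comap (Subalgebra.center k T).val : Set (Subalgebra.center k T)) =
      (J : Set T) ∩ Subalgebra.center k T := by
  ext x
  constructor
  · rintro ⟨z, hz, rfl⟩
    exact ⟨hz, z.2⟩
  · rintro ⟨hx, hxc⟩
    exact ⟨⟨x, hxc⟩, hx, rfl⟩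

def centerIdealOrderIso (hmul : ∀ a c, b a * b c = (μ a c : k) • b (a + c))
    (hone : b 0 = 1) :
    Ideal (Subalgebra.center k T) ≃o TwoSidedIdeal T where
  toFun I := TwoSidedIdeal.span (Subtype.val '' (I : Set (Subalgebra.center k T)))
  invFun J := J.asIdeal.comap (Subalgebra.center k T).val
  left_inv I := Ideal.ext fun _ =>
    ⟨mem_of_coe_mem_span hmul hone I, fun hz => TwoSidedIdeal.subset_span ⟨_, hz, rfl⟩⟩
  right_inv J := by
    simp only [image_comap_val_eq_inter_center]
    exact (eq_span_inter_center hmul hone J).symm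
  map_rel_iff' {I I'} :=
    ⟨fun h z hz =>
      mem_of_coe_mem_span hmul hone I' (h (TwoSidedIdeal.subset_span ⟨z, hz, rfl⟩)),
      fun h => TwoSidedIdeal.span_mono (Set.image_mono h)⟩

end QuantumTorus

open QuantumTorus in
/-- Proposition (used in the proof of Proposition 6.3 of Goodearl–Launois–Lenagan; see
[BG, Proposition II.3.8]): for a quantum torus `T` over a field `k` (axiomatized by its
monomial basis `yᵃ`, `a ∈ ℤⁿ`, with `y⁰ = 1` and `yᵃyᵇ = μ(a,b) y^{a+b}`, `μ(a,b) ∈ k*`),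
extension and contraction give mutually inverse, inclusion-preserving bijections between
the ideals of the center `Z(T)` and the two-sided ideals of `T`: `I ↦ IT` and
`J ↦ J ∩ Z(T)`. In particular, if `m` is a maximal ideal of `Z(T)` then `mT` is a
maximal two-sided ideal of `T`. -/
theorem quantum_torus_ideal_correspondence
    (k : Type*) [Field k] (n : ℕ)
    (T : Type*) [Ring T] [Algebra k T]
    (y : (Fin n → ℤ) → T)
    (hindep : LinearIndependent k y)
    (hspan : Submodule.span k (Set.range y) = ⊤)
    (hone : y 0 = 1)
    (μ : (Fin n → ℤ) → (Fin n → ℤ) → kˣ)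
    (hmul : ∀ a b, y a * y b = (μ a b : k) • y (a + b)) :
    -- contraction followed by extension recovers every two-sided ideal of `T`
    (∀ J : TwoSidedIdeal T,
      J = TwoSidedIdeal.span ((J : Set T) ∩ (Subalgebra.center k T : Set T))) ∧
    -- extension followed by contraction recovers every ideal of the center
    (∀ I : Ideal (Subalgebra.center k T), ∀ z : Subalgebra.center k T,
      z ∈ I ↔ (z : T) ∈ TwoSidedIdeal.span
        (Subtype.val '' (I : Set (Subalgebra.center k T)))) ∧
    -- maximal ideals of the center extend to maximal two-sided ideals of `T`
    (∀ m : Ideal (Subalgebra.center k T), m.IsMaximal →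
      TwoSidedIdeal.span (Subtype.val '' (m : Set (Subalgebra.center k T))) ≠ ⊤ ∧
      ∀ J : TwoSidedIdeal T,
        TwoSidedIdeal.span (Subtype.val '' (m : Set (Subalgebra.center k T))) < J →
        J = ⊤) := by
  obtain ⟨b, rfl⟩ : ∃ b : Basis (Fin n → ℤ) k T, ⇑b = y :=
    ⟨Basis.mk hindep hspan.ge, Basis.coe_mk _ _⟩
  refine ⟨eq_span_inter_center hmul hone, fun I z => ?_, fun m hm => ?_⟩
  · exact ⟨fun hz => TwoSidedIdeal.subset_span ⟨z, hz, rfl⟩,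
      mem_of_coe_mem_span hmul hone I⟩
  · exact ((centerIdealOrderIso hmul hone).isCoatom_iff m).mpr (Ideal.isMaximal_def.mp hm)
end
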